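/- arXiv:1612.09598 — 4 statements merged into one kernel-verified Lean document; each statement's English description precedes it below -/
import Mathlib

section
/- Let 0 < q < 1 and let (k,l,m) be an admissible triple with k = l + m − 2r, 0 ≤ r ≤ min(l,m). Then [k+1]_q/θ_q(k,l,m) ≤ (1/[r+1]_q) · (∏_{s=1}^{∞} 1/(1 − q^{2s}))³, and in particular [k+1]_q/θ_q(k,l,m) ≤ C(q)² · q^{(l+m−k)/2}, where C(q)² := (1 − q²)^{−1} (∏_{s=1}^{∞} 1/(1 − q^{2s}))³. -/
/-! Write `t = q²`, so that `[n+1]_q = q⁻ⁿ (1 - tⁿ⁺¹) / (1 - t)`. After cancelling the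
common factorials, `[k+1]/θ(k,l,m)` is a product of `r` factors
`[l-r+x+1][m-r+x+1] / ([x+1][k+x+2])`, and the powers of `q` in each of them add up to
exactly `q`. The remaining `t`-factors are at most `(1 - t^(x+1))⁻¹ (1 - t^(x+2))⁻¹`, so the
product is at most `q^r P²` with `P = ∏ₛ (1 - t^(s+1))⁻¹`. Finally
`[r+1] q^r = (1 - t^(r+1)) / (1 - t) ≤ (1 - t)⁻¹ ≤ P` and `P ≥ 1`. -/

/-- The quantum integer [n]_q = (q^{-n} - q^n)/(q^{-1} - q), with [0]_q = 0. -/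
noncomputable def qint (q : ℝ) (n : ℕ) : ℝ :=
  (q ^ (-(n : ℤ)) - q ^ (n : ℤ)) / (q⁻¹ - q)

/-- The quantum factorial [n]_q!. -/
noncomputable def qfact (q : ℝ) (n : ℕ) : ℝ :=
  ∏ i ∈ Finset.range n, qint q (i + 1)

/-- The theta-net θ_q(k,l,m) where k = l + m - 2r. -/
noncomputable def qtheta (q : ℝ) (k l m r : ℕ) : ℝ :=
  (qfact q r * qfact q (l - r) * qfact q (m - r) * qfact q (k + r + 1)) /
    (qfact q l * qfact q m * qfact q k)

open Finset

lemma prod_le_tprod_of_one_le {ι : Type*} {f : ι → ℝ} (s : Finset ι) (h : ∀ i, 1 ≤ f i)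
    (hf : Multipliable f) : ∏ i ∈ s, f i ≤ ∏' i, f i := by
  classical
  refine ge_of_tendsto hf.hasProd (Filter.eventually_atTop.2 ⟨s, fun u hsu => ?_⟩)
  exact prod_le_prod_of_subset_of_one_le hsu (fun i _ => zero_le_one.trans (h i)) fun i _ _ => h i

lemma one_le_inv_one_sub_pow_succ {t : ℝ} (h0 : 0 ≤ t) (h1 : t < 1) (s : ℕ) :
    1 ≤ (1 - t ^ (s + 1))⁻¹ :=
  (one_le_inv₀ (sub_pos.2 (pow_lt_one₀ h0 h1 s.succ_ne_zero))).2
    (sub_le_self _ (pow_nonneg h0 _))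

lemma multipliable_inv_one_sub_pow_succ {t : ℝ} (h0 : 0 ≤ t) (h1 : t < 1) :
    Multipliable fun s : ℕ => (1 - t ^ (s + 1))⁻¹ := by
  have hgeom : Summable fun s : ℕ => t ^ (s + 1) :=
    (summable_nat_add_iff 1).2 (summable_geometric_of_lt_one h0 h1)
  refine Real.multipliable_of_summable_log
    (fun s => zero_lt_one.trans_le (one_le_inv_one_sub_pow_succ h0 h1 s)) ?_
  simpa [Real.log_inv, sub_eq_add_neg] using (Real.summable_log_one_add_of_summable hgeom.neg).neg

noncomputable def eulerInv (t : ℝ) : ℝ := ∏' s : ℕ, (1 - t ^ (s + 1))⁻¹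

lemma prod_range_le_eulerInv {t : ℝ} (h0 : 0 ≤ t) (h1 : t < 1) (n : ℕ) :
    ∏ s ∈ range n, (1 - t ^ (s + 1))⁻¹ ≤ eulerInv t :=
  prod_le_tprod_of_one_le _ (one_le_inv_one_sub_pow_succ h0 h1)
    (multipliable_inv_one_sub_pow_succ h0 h1)

lemma prod_range_shift_le_eulerInv {t : ℝ} (h0 : 0 ≤ t) (h1 : t < 1) (n : ℕ) :
    ∏ s ∈ range n, (1 - t ^ (s + 1 + 1))⁻¹ ≤ eulerInv t := by
  refine le_trans ?_ (prod_range_le_eulerInv h0 h1 (n + 1))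
  rw [prod_range_succ']
  exact le_mul_of_one_le_right
    (prod_nonneg fun s _ => zero_le_one.trans (one_le_inv_one_sub_pow_succ h0 h1 (s + 1)))
    (by simpa using one_le_inv_one_sub_pow_succ h0 h1 0)

lemma one_le_eulerInv {t : ℝ} (h0 : 0 ≤ t) (h1 : t < 1) : 1 ≤ eulerInv t := by
  simpa using prod_range_le_eulerInv h0 h1 0

lemma inv_one_sub_le_eulerInv {t : ℝ} (h0 : 0 ≤ t) (h1 : t < 1) :
    (1 - t)⁻¹ ≤ eulerInv t := by
  simpa using prod_range_le_eulerInv h0 h1 1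

lemma one_sub_pow_ratio_le {t : ℝ} (h0 : 0 ≤ t) (h1 : t < 1) (i j x : ℕ) {n : ℕ}
    (hn : x + 2 ≤ n) :
    (1 - t ^ i) * (1 - t ^ j) / ((1 - t ^ (x + 1)) * (1 - t ^ n)) ≤
      (1 - t ^ (x + 1))⁻¹ * (1 - t ^ (x + 1 + 1))⁻¹ := by
  have hpow : ∀ k, t ^ k ≤ 1 := fun k => pow_le_one₀ h0 h1.le
  have hx1 : 0 < 1 - t ^ (x + 1) := sub_pos.2 (pow_lt_one₀ h0 h1 x.succ_ne_zero)
  have hx2 : 0 < 1 - t ^ (x + 1 + 1) := sub_pos.2 (pow_lt_one₀ h0 h1 (x + 1).succ_ne_zero)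
  have hn2 : 1 - t ^ (x + 1 + 1) ≤ 1 - t ^ n :=
    sub_le_sub_left (pow_le_pow_of_le_one h0 h1.le hn) 1
  have hnum : (1 - t ^ i) * (1 - t ^ j) ≤ 1 :=
    mul_le_one₀ (sub_le_self _ (pow_nonneg h0 i)) (sub_nonneg.2 (hpow j))
      (sub_le_self _ (pow_nonneg h0 j))
  calc (1 - t ^ i) * (1 - t ^ j) / ((1 - t ^ (x + 1)) * (1 - t ^ n))
      ≤ 1 / ((1 - t ^ (x + 1)) * (1 - t ^ (x + 1 + 1))) :=
        div_le_div₀ zero_le_one hnum (by positivity) (mul_le_mul_of_nonneg_left hn2 hx1.le)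
    _ = (1 - t ^ (x + 1))⁻¹ * (1 - t ^ (x + 1 + 1))⁻¹ := by rw [one_div, mul_inv]

lemma qint_succ {q : ℝ} (hq : q ≠ 0) (hq2 : q ^ 2 ≠ 1) (n : ℕ) :
    qint q (n + 1) = (1 - (q ^ 2) ^ (n + 1)) / ((1 - q ^ 2) * q ^ n) := by
  have hq2' : 1 - q ^ 2 ≠ 0 := sub_ne_zero.2 (Ne.symm hq2)
  rw [qint, zpow_neg, zpow_natCast]
  field_simp
  ring

lemma qint_succ_pos {q : ℝ} (h0 : 0 < q) (h1 : q < 1) (n : ℕ) : 0 < qint q (n + 1) := by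
  have hq2 : q ^ 2 < 1 := pow_lt_one₀ h0.le h1 two_ne_zero
  rw [qint_succ h0.ne' hq2.ne]
  have : (q ^ 2) ^ (n + 1) < 1 := pow_lt_one₀ (by positivity) hq2 n.succ_ne_zero
  have : 0 < 1 - q ^ 2 := sub_pos.2 hq2
  have : 0 < 1 - (q ^ 2) ^ (n + 1) := by linarith
  positivity

lemma qint_succ_mul_pow_le {q : ℝ} (h0 : 0 < q) (h1 : q < 1) (n : ℕ) :
    qint q (n + 1) * q ^ n ≤ (1 - q ^ 2)⁻¹ := by
  have hq2 : q ^ 2 < 1 := pow_lt_one₀ h0.le h1 two_ne_zero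
  rw [qint_succ h0.ne' hq2.ne, div_mul_eq_div_div, div_mul_cancel₀ _ (by positivity),
    inv_eq_one_div]
  exact div_le_div_of_nonneg_right (sub_le_self _ (by positivity)) (sub_pos.2 hq2).le

lemma qint_ratio_eq {q : ℝ} (h0 : 0 < q) (h1 : q < 1) (a b x : ℕ) :
    qint q (a + x + 1) * qint q (b + x + 1) / (qint q (x + 1) * qint q (a + b + x + 2)) =
      q * ((1 - (q ^ 2) ^ (a + x + 1)) * (1 - (q ^ 2) ^ (b + x + 1)) /
        ((1 - (q ^ 2) ^ (x + 1)) * (1 - (q ^ 2) ^ (a + b + x + 2)))) := by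
  have hq2 : q ^ 2 < 1 := pow_lt_one₀ h0.le h1 two_ne_zero
  have hne : ∀ n, 1 - (q ^ 2) ^ (n + 1) ≠ 0 := fun n =>
    (sub_pos.2 (pow_lt_one₀ (by positivity) hq2 n.succ_ne_zero)).ne'
  have := hne x
  have := hne (a + b + x + 1)
  have := (sub_pos.2 hq2).ne'
  rw [show a + b + x + 2 = a + b + x + 1 + 1 from rfl]
  simp only [qint_succ h0.ne' hq2.ne]
  field_simp
  ring

lemma qfact_succ (q : ℝ) (n : ℕ) : qfact q (n + 1) = qfact q n * qint q (n + 1) :=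
  prod_range_succ _ _

lemma qfact_add (q : ℝ) (a b : ℕ) :
    qfact q (a + b) = qfact q a * ∏ x ∈ range b, qint q (a + x + 1) := by
  simp only [qfact, prod_range_add, add_assoc]

lemma qint_div_qtheta_eq_prod {q : ℝ} (hq : ∀ n, qint q (n + 1) ≠ 0) (a b r : ℕ) :
    qint q (a + b + 1) / qtheta q (a + b) (a + r) (b + r) r =
      ∏ x ∈ range r, qint q (a + x + 1) * qint q (b + x + 1) /
        (qint q (x + 1) * qint q (a + b + x + 2)) := by
  have hfact : ∀ n, qfact q n ≠ 0 := fun n => prod_ne_zero_iff.2 fun i _ => hq i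
  have hk : qfact q (a + b + r + 1) =
      qfact q (a + b) * qint q (a + b + 1) * ∏ x ∈ range r, qint q (a + b + x + 2) := by
    rw [show a + b + r + 1 = a + b + 1 + r by omega, qfact_add, qfact_succ]
    exact congrArg _ (prod_congr rfl fun x _ => congrArg _ (by omega))
  have hr : qfact q r = ∏ x ∈ range r, qint q (x + 1) := rfl
  have := hfact a
  have := hfact b
  have := hfact (a + b)
  have := hq (a + b)
  have : ∏ x ∈ range r, qint q (x + 1) ≠ 0 := hfact r
  have : ∏ x ∈ range r, qint q (a + b + x + 2) ≠ 0 := prod_ne_zero_iff.2 fun x _ => hq _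
  rw [qtheta, Nat.add_sub_cancel, Nat.add_sub_cancel, hk, qfact_add q a r, qfact_add q b r, hr,
    prod_div_distrib, prod_mul_distrib, prod_mul_distrib]
  field_simp

lemma qint_div_qtheta_le {q : ℝ} (h0 : 0 < q) (h1 : q < 1) (a b r : ℕ) :
    qint q (a + b + 1) / qtheta q (a + b) (a + r) (b + r) r ≤ q ^ r * eulerInv (q ^ 2) ^ 2 := by
  have ht0 : 0 ≤ q ^ 2 := by positivity
  have ht1 : q ^ 2 < 1 := pow_lt_one₀ h0.le h1 two_ne_zero
  set u : ℕ → ℝ := fun s => (1 - (q ^ 2) ^ (s + 1))⁻¹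
  have hu : ∀ s, 0 ≤ u s := fun s => zero_le_one.trans (one_le_inv_one_sub_pow_succ ht0 ht1 s)
  have hfactor : ∀ x ∈ range r,
      qint q (a + x + 1) * qint q (b + x + 1) / (qint q (x + 1) * qint q (a + b + x + 2)) ≤
        q * (u x * u (x + 1)) := fun x _ => by
    rw [qint_ratio_eq h0 h1]
    exact mul_le_mul_of_nonneg_left (one_sub_pow_ratio_le ht0 ht1 _ _ x (by omega)) h0.le
  have hfactor_nonneg : ∀ x ∈ range r, 0 ≤
      qint q (a + x + 1) * qint q (b + x + 1) / (qint q (x + 1) * qint q (a + b + x + 2)) :=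
    fun x _ => by
      have := qint_succ_pos h0 h1 (a + x)
      have := qint_succ_pos h0 h1 (b + x)
      have := qint_succ_pos h0 h1 x
      have := qint_succ_pos h0 h1 (a + b + x + 1)
      positivity
  rw [qint_div_qtheta_eq_prod (fun n => (qint_succ_pos h0 h1 n).ne')]
  calc _ ≤ ∏ x ∈ range r, q * (u x * u (x + 1)) := prod_le_prod hfactor_nonneg hfactor
    _ = q ^ r * ((∏ x ∈ range r, u x) * ∏ x ∈ range r, u (x + 1)) := by
      rw [prod_mul_distrib, prod_mul_distrib, prod_const, card_range]
    _ ≤ q ^ r * eulerInv (q ^ 2) ^ 2 := by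
      rw [sq]
      exact mul_le_mul_of_nonneg_left
        (mul_le_mul (prod_range_le_eulerInv ht0 ht1 r) (prod_range_shift_le_eulerInv ht0 ht1 r)
          (prod_nonneg fun x _ => hu (x + 1)) (zero_le_one.trans (one_le_eulerInv ht0 ht1)))
        (pow_nonneg h0.le r)

theorem theta_ratio_upper_bounds (q : ℝ) (h0 : 0 < q) (h1 : q < 1)
    (k l m r : ℕ) (hr : r ≤ min l m) (hk : k + 2 * r = l + m) :
    qint q (k + 1) / qtheta q k l m r ≤
      (1 / qint q (r + 1)) * (∏' s : ℕ, (1 - q ^ (2 * (s + 1)))⁻¹) ^ 3 ∧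
    qint q (k + 1) / qtheta q k l m r ≤
      ((1 - q ^ 2)⁻¹ * (∏' s : ℕ, (1 - q ^ (2 * (s + 1)))⁻¹) ^ 3) *
        q ^ ((l + m - k) / 2) := by
  obtain ⟨a, rfl⟩ : ∃ a, l = a + r := ⟨l - r, by omega⟩
  obtain ⟨b, rfl⟩ : ∃ b, m = b + r := ⟨m - r, by omega⟩
  obtain rfl : k = a + b := by omega
  have ht0 : 0 ≤ q ^ 2 := by positivity
  have ht1 : q ^ 2 < 1 := pow_lt_one₀ h0.le h1 two_ne_zero
  have hP : ∏' s : ℕ, (1 - q ^ (2 * (s + 1)))⁻¹ = eulerInv (q ^ 2) := by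
    simp only [eulerInv, pow_mul]
  rw [hP, show (a + r + (b + r) - (a + b)) / 2 = r by omega]
  have hbound := qint_div_qtheta_le h0 h1 a b r
  have hP1 := one_le_eulerInv ht0 ht1
  have hqr : qint q (r + 1) * q ^ r ≤ eulerInv (q ^ 2) :=
    (qint_succ_mul_pow_le h0 h1 r).trans (inv_one_sub_le_eulerInv ht0 ht1)
  constructor
  · rw [one_div_mul_eq_div, le_div_iff₀ (qint_succ_pos h0 h1 r)]
    calc _ ≤ q ^ r * eulerInv (q ^ 2) ^ 2 * qint q (r + 1) :=
          mul_le_mul_of_nonneg_right hbound (qint_succ_pos h0 h1 r).le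
      _ = qint q (r + 1) * q ^ r * eulerInv (q ^ 2) ^ 2 := by ring
      _ ≤ eulerInv (q ^ 2) * eulerInv (q ^ 2) ^ 2 := mul_le_mul_of_nonneg_right hqr (sq_nonneg _)
      _ = eulerInv (q ^ 2) ^ 3 := by ring
  · have hinv : 1 ≤ (1 - q ^ 2)⁻¹ := (one_le_inv₀ (sub_pos.2 ht1)).2 (sub_le_self _ ht0)
    calc _ ≤ q ^ r * eulerInv (q ^ 2) ^ 2 := hbound
      _ ≤ q ^ r * ((1 - q ^ 2)⁻¹ * eulerInv (q ^ 2) * eulerInv (q ^ 2) ^ 2) :=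
          mul_le_mul_of_nonneg_left
            (le_mul_of_one_le_left (sq_nonneg _) (one_le_mul_of_one_le_of_one_le hinv hP1))
            (pow_nonneg h0.le r)
      _ = _ := by ring
end

section
/- Let H be a finite-dimensional complex Hilbert space of dimension d ≥ 2, and let V ⊆ H ⊗ H be a linear subspace such that every unit vector in V is maximally entangled (i.e., all of its d Schmidt coefficients equal 1/d). Then dim V ≤ 1. -/
open scoped Matrix

theorem maximally_entangled_subspace_dim_le_one (d : ℕ) (hd : 2 ≤ d)
    (V : Submodule ℂ (EuclideanSpace ℂ (Fin d × Fin d)))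
    (hV : ∀ ξ ∈ V, ‖ξ‖ = 1 →
      (Matrix.of fun i j => ξ (i, j)).conjTranspose *
          (Matrix.of fun i j => ξ (i, j)) = ((d : ℂ))⁻¹ • 1) :
    Module.finrank ℂ V ≤ 1 := by
  set M : EuclideanSpace ℂ (Fin d × Fin d) → Matrix (Fin d) (Fin d) ℂ :=
    fun ξ => Matrix.of fun i j => ξ (i, j) with hM
  have hV' : ∀ ξ ∈ V, ‖ξ‖ = 1 → (M ξ)ᴴ * M ξ = ((d : ℂ))⁻¹ • 1 := hV
  have hM_add : ∀ x y, M (x + y) = M x + M y := by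
    intro x y; ext i j; simp [hM]
  have hM_smul : ∀ (c : ℂ) x, M (c • x) = c • M x := by
    intro c x; ext i j; simp [hM]
  have key : ∀ ζ ∈ V, ∃ r : ℂ, (M ζ)ᴴ * M ζ = r • (1 : Matrix (Fin d) (Fin d) ℂ) := by
    intro ζ hζ
    rcases eq_or_ne ζ 0 with h0 | h0
    · refine ⟨0, ?_⟩
      subst h0
      have : M 0 = 0 := by ext i j; simp [hM]
      simp [this]
    · have hn : ‖ζ‖ ≠ 0 := norm_ne_zero_iff.mpr h0
      set c : ℂ := ((‖ζ‖⁻¹ : ℝ) : ℂ) with hc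
      have hcu : ‖c • ζ‖ = 1 := by
        rw [norm_smul]
        simp [hc, abs_of_nonneg, hn]
      have h := hV' (c • ζ) (V.smul_mem c hζ) hcu
      rw [hM_smul, Matrix.conjTranspose_smul, Matrix.smul_mul, Matrix.mul_smul,
        smul_smul] at h
      have hcc : star c * c = ((‖ζ‖ ^ 2 : ℝ) : ℂ)⁻¹ := by
        simp [hc, ← Complex.ofReal_mul]
        ring
      rw [hcc] at h
      refine ⟨((‖ζ‖ ^ 2 : ℝ) : ℂ) * (d : ℂ)⁻¹, ?_⟩
      have hz2 : ((‖ζ‖ ^ 2 : ℝ) : ℂ) ≠ 0 := by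
        simp [pow_eq_zero_iff, hn]
      have := congrArg (fun Z => ((‖ζ‖ ^ 2 : ℝ) : ℂ) • Z) h
      simp only [smul_smul] at this
      rw [mul_inv_cancel₀ hz2, one_smul] at this
      rw [this]
  rcases eq_or_ne V ⊥ with hbot | hbot
  · subst hbot; simp [finrank_bot]
  · obtain ⟨ξ0, hξ0V, hξ0⟩ := Submodule.exists_mem_ne_zero_of_ne_bot hbot
    have hn : ‖ξ0‖ ≠ 0 := norm_ne_zero_iff.mpr hξ0
    obtain ⟨u, huV, hu1⟩ : ∃ u ∈ V, ‖u‖ = 1 := by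
      refine ⟨((‖ξ0‖⁻¹ : ℝ) : ℂ) • ξ0, V.smul_mem _ hξ0V, ?_⟩
      rw [norm_smul]; simp [abs_of_nonneg, hn]
    have hA : (M u)ᴴ * M u = ((d : ℂ))⁻¹ • 1 := hV' u huV hu1
    apply finrank_le_one (⟨u, huV⟩ : V)
    rintro ⟨η, hηV⟩
    set A := M u with hAdef
    set Bm := M η with hBdef
    set X := Aᴴ * Bm with hXdef
    set Y := Bmᴴ * A with hYdef
    obtain ⟨rB, hrB⟩ := key η hηV
    obtain ⟨r1, hr1⟩ := key (u + η) (V.add_mem huV hηV)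
    obtain ⟨r2, hr2⟩ := key (u + Complex.I • η) (V.add_mem huV (V.smul_mem _ hηV))
    -- first polarization
    have e1 : X + Y = (r1 - (d : ℂ)⁻¹ - rB) • 1 := by
      have hexp : (M (u + η))ᴴ * M (u + η) = Aᴴ * A + X + Y + Bmᴴ * Bm := by
        rw [hM_add, Matrix.conjTranspose_add, Matrix.add_mul, Matrix.mul_add,
          Matrix.mul_add, hXdef, hYdef]
        abel
      rw [hexp, hA, hrB] at hr1
      rw [sub_smul, sub_smul, ← hr1]
      abel
    -- second polarization
    have e2 : Complex.I • X - Complex.I • Y = (r2 - (d : ℂ)⁻¹ - rB) • 1 := by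
      have hexp : (M (u + Complex.I • η))ᴴ * M (u + Complex.I • η)
          = Aᴴ * A + Complex.I • X + (-Complex.I) • Y + Bmᴴ * Bm := by
        rw [hM_add, hM_smul Complex.I η, Matrix.conjTranspose_add, Matrix.conjTranspose_smul,
          Matrix.add_mul, Matrix.mul_add, Matrix.mul_add, Matrix.smul_mul,
          Matrix.smul_mul, Matrix.mul_smul, Matrix.mul_smul, smul_smul]
        rw [Complex.star_def, Complex.conj_I, neg_mul, Complex.I_mul_I, neg_neg, one_smul]
        rw [hXdef, hYdef]
        abel
      rw [hexp, hA, hrB] at hr2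
      rw [sub_smul, sub_smul, ← hr2]
      rw [neg_smul]
      abel
    have e2' : X - Y = (-Complex.I * (r2 - (d : ℂ)⁻¹ - rB)) • 1 := by
      have := congrArg (fun Z => (-Complex.I) • Z) e2
      simp only [smul_sub, smul_smul] at this
      rw [neg_mul, Complex.I_mul_I, neg_neg, one_smul, one_smul] at this
      rw [this]
    set μ : ℂ := (2 : ℂ)⁻¹ * ((r1 - (d : ℂ)⁻¹ - rB) + -Complex.I * (r2 - (d : ℂ)⁻¹ - rB))
      with hμ
    have hXμ : X = μ • 1 := by
      have h2 : (2 : ℂ) • X = ((r1 - (d : ℂ)⁻¹ - rB) + -Complex.I * (r2 - (d : ℂ)⁻¹ - rB)) • 1 := by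
        rw [add_smul, ← e1, ← e2']
        module
      have h3 : X = (2 : ℂ)⁻¹ • ((2 : ℂ) • X) := by
        rw [smul_smul]; norm_num
      rw [h3, h2, smul_smul, hμ]
    -- now invert A
    have hd0 : (d : ℂ) ≠ 0 := by
      exact_mod_cast Nat.cast_ne_zero.mpr (by omega)
    have hinv : ((d : ℂ) • Aᴴ) * A = 1 := by
      rw [Matrix.smul_mul, hA, smul_smul, mul_inv_cancel₀ hd0, one_smul]
    have hinv' : A * ((d : ℂ) • Aᴴ) = 1 := mul_eq_one_comm.mp hinv
    have hBm : Bm = ((d : ℂ) * μ) • A := by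
      calc Bm = (A * ((d : ℂ) • Aᴴ)) * Bm := by rw [hinv', Matrix.one_mul]
        _ = (d : ℂ) • (A * (Aᴴ * Bm)) := by
            rw [Matrix.mul_smul, Matrix.smul_mul, Matrix.mul_assoc]
        _ = (d : ℂ) • (A * (μ • 1)) := by rw [← hXdef, hXμ]
        _ = ((d : ℂ) * μ) • A := by
            rw [Matrix.mul_smul, Matrix.mul_one, smul_smul]
    refine ⟨(d : ℂ) * μ, ?_⟩
    ext p
    have := congrFun (congrFun hBm p.1) p.2
    simpa [hBdef, hAdef, hM, Matrix.smul_apply, smul_eq_mul] using this.symm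
end

section
/- Let H_A, H_B, H_C be finite-dimensional Hilbert spaces, α : H_A → H_B ⊗ H_C a linear isometry, and Φ : B(H_A) → B(H_C), Φ(ρ) = (Tr_{H_B} ⊗ id)(α ρ α*) the associated quantum channel. If sup{ |⟨α(ξ), η ⊗ ζ⟩| : ξ, η, ζ unit vectors } ≤ c, then for every density matrix ρ on H_A, the operator norm of Φ(ρ) is at most c², and consequently the minimum output entropy satisfies H_min(Φ) ≥ −2 log c. -/
open scoped ComplexOrder

open scoped InnerProductSpace

/-- The elementary tensor of two vectors, in the Euclidean model of H_B ⊗ H_C. -/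
noncomputable def tensor {a b : ℕ} (η : EuclideanSpace ℂ (Fin a))
    (ζ : EuclideanSpace ℂ (Fin b)) : EuclideanSpace ℂ (Fin a × Fin b) :=
  WithLp.toLp 2 (fun p : Fin a × Fin b => η p.1 * ζ p.2)

/-- The matrix of a linear isometry α : H_A → H_B ⊗ H_C in the standard bases. -/
noncomputable def isomMat {a b c : ℕ}
    (α : EuclideanSpace ℂ (Fin a) →ₗᵢ[ℂ] EuclideanSpace ℂ (Fin b × Fin c)) :
    Matrix (Fin b × Fin c) (Fin a) ℂ :=
  Matrix.of fun p s => α (EuclideanSpace.single s 1) p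

/-- The quantum channel Φ(ρ) = (Tr_{H_B} ⊗ id)(α ρ α*). -/
noncomputable def chan {a b c : ℕ}
    (α : EuclideanSpace ℂ (Fin a) →ₗᵢ[ℂ] EuclideanSpace ℂ (Fin b × Fin c))
    (ρ : Matrix (Fin a) (Fin a) ℂ) : Matrix (Fin c) (Fin c) ℂ :=
  Matrix.of fun j j' => ∑ i : Fin b,
    (isomMat α * ρ * (isomMat α).conjTranspose) (i, j) (i, j')

/-!
Write `ρ = ∑ₖ vₖ vₖ*`. For a pure input, `Φ(v v*) = Y* Y` where `Y = starCurry (α v)` is the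
`b × c` matrix of the bilinear form `(η, ζ) ↦ ⟪α v, η ⊗ ζ⟫`, so the hypothesis says exactly that
`‖Y‖ ≤ C ‖v‖`, whence `‖Φ(v v*)‖ = ‖Y‖² ≤ C² ‖v‖²`. Summing over `k` gives `‖Φ(ρ)‖ ≤ C² tr ρ = C²`.
The eigenvalues of `Φ(ρ)` then form a probability vector with entries at most `C²`, so
`∑ λ log λ ≤ log C²`.
-/

open Matrix
open scoped Matrix.Norms.L2Operator

lemma le_mul_norm_of_forall_norm_eq_one {𝕜 E : Type*} [RCLike 𝕜] [NormedAddCommGroup E]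
    [NormedSpace 𝕜 E] {f : E → ℝ} (hf : ∀ (s : 𝕜) x, f (s • x) = ‖s‖ * f x) {C : ℝ}
    (h : ∀ x, ‖x‖ = 1 → f x ≤ C) (x : E) : f x ≤ C * ‖x‖ := by
  rcases eq_or_ne x 0 with rfl | hx
  · simpa using (hf 0 0).le
  have hx' : (‖x‖ : 𝕜) ≠ 0 := by exact_mod_cast norm_ne_zero_iff.mpr hx
  calc f x = f ((‖x‖ : 𝕜) • ((‖x‖ : 𝕜)⁻¹ • x)) := by rw [smul_inv_smul₀ hx']
    _ = ‖x‖ * f ((‖x‖ : 𝕜)⁻¹ • x) := by rw [hf, RCLike.norm_ofReal, abs_norm]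
    _ ≤ ‖x‖ * C := by gcongr; exact h _ (norm_smul_inv_norm hx)
    _ = C * ‖x‖ := mul_comm _ _

lemma trace_vecMulVec_star {n : Type*} [Fintype n] (v : n → ℂ) :
    (vecMulVec v (star v)).trace = ((‖(WithLp.toLp 2 v : EuclideanSpace ℂ n)‖ ^ 2 : ℝ) : ℂ) := by
  rw [trace_vecMulVec, ← EuclideanSpace.inner_toLp_toLp, inner_self_eq_norm_sq_to_K]
  norm_cast

section Tensor

variable {b c : ℕ}

lemma tensor_smul_left (s : ℂ) (η : EuclideanSpace ℂ (Fin b)) (ζ : EuclideanSpace ℂ (Fin c)) :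
    tensor (s • η) ζ = s • tensor η ζ := by
  ext p
  simp [tensor, mul_assoc]

lemma tensor_smul_right (s : ℂ) (η : EuclideanSpace ℂ (Fin b)) (ζ : EuclideanSpace ℂ (Fin c)) :
    tensor η (s • ζ) = s • tensor η ζ := by
  ext p
  simp [tensor, mul_left_comm]

def starCurry (x : EuclideanSpace ℂ (Fin b × Fin c)) : Matrix (Fin b) (Fin c) ℂ :=
  Matrix.of fun i j => star (x (i, j))

lemma inner_tensor_eq_dotProduct (x : EuclideanSpace ℂ (Fin b × Fin c))
    (η : EuclideanSpace ℂ (Fin b)) (ζ : EuclideanSpace ℂ (Fin c)) :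
    ⟪x, tensor η ζ⟫_ℂ = η ⬝ᵥ (starCurry x *ᵥ ζ) := by
  simp [PiLp.inner_apply, tensor, starCurry, dotProduct, mulVec, Fintype.sum_prod_type,
    Finset.mul_sum, mul_assoc, mul_comm]

end Tensor

def ProductOverlapLE {a b c : ℕ}
    (α : EuclideanSpace ℂ (Fin a) →ₗᵢ[ℂ] EuclideanSpace ℂ (Fin b × Fin c)) (C : ℝ) : Prop :=
  ∀ (ξ : EuclideanSpace ℂ (Fin a)) (η : EuclideanSpace ℂ (Fin b)) (ζ : EuclideanSpace ℂ (Fin c)),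
    ‖ξ‖ = 1 → ‖η‖ = 1 → ‖ζ‖ = 1 → ‖⟪α ξ, tensor η ζ⟫_ℂ‖ ≤ C

section Bounds

variable {a b c : ℕ} {α : EuclideanSpace ℂ (Fin a) →ₗᵢ[ℂ] EuclideanSpace ℂ (Fin b × Fin c)}
  {C : ℝ}

lemma norm_inner_tensor_le (hα : ProductOverlapLE α C)
    (ξ : EuclideanSpace ℂ (Fin a)) (η : EuclideanSpace ℂ (Fin b)) (ζ : EuclideanSpace ℂ (Fin c)) :
    ‖⟪α ξ, tensor η ζ⟫_ℂ‖ ≤ C * ‖ξ‖ * ‖η‖ * ‖ζ‖ := by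
  have hξ (η ζ) (hη : ‖η‖ = 1) (hζ : ‖ζ‖ = 1) (ξ) : ‖⟪α ξ, tensor η ζ⟫_ℂ‖ ≤ C * ‖ξ‖ :=
    le_mul_norm_of_forall_norm_eq_one (𝕜 := ℂ) (f := fun ξ => ‖⟪α ξ, tensor η ζ⟫_ℂ‖)
      (by simp [mul_comm]) (fun ξ hξ => hα ξ η ζ hξ hη hζ) ξ
  have hη (ζ) (hζ : ‖ζ‖ = 1) (ξ η) : ‖⟪α ξ, tensor η ζ⟫_ℂ‖ ≤ C * ‖ξ‖ * ‖η‖ :=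
    le_mul_norm_of_forall_norm_eq_one (𝕜 := ℂ) (f := fun η => ‖⟪α ξ, tensor η ζ⟫_ℂ‖)
      (by simp [tensor_smul_left]) (fun η hη => hξ η ζ hη hζ ξ) η
  exact le_mul_norm_of_forall_norm_eq_one (𝕜 := ℂ) (f := fun ζ => ‖⟪α ξ, tensor η ζ⟫_ℂ‖)
    (by simp [tensor_smul_right]) (fun ζ hζ => hη ζ hζ ξ η) ζ

lemma norm_starCurry_le (hC : 0 ≤ C) (hα : ProductOverlapLE α C)
    (ξ : EuclideanSpace ℂ (Fin a)) : ‖starCurry (α ξ)‖ ≤ C * ‖ξ‖ := by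
  rw [l2_opNorm_def]
  refine ContinuousLinearMap.opNorm_le_bound _ (by positivity) fun ζ => ?_
  set w : EuclideanSpace ℂ (Fin b) := WithLp.toLp 2 (starCurry (α ξ) *ᵥ ζ)
  change ‖w‖ ≤ C * ‖ξ‖ * ‖ζ‖
  have hstar : ‖(WithLp.toLp 2 (star w.ofLp) : EuclideanSpace ℂ (Fin b))‖ = ‖w‖ := by
    simp [EuclideanSpace.norm_eq]
  have key : ‖w‖ ^ 2 ≤ C * ‖ξ‖ * ‖ζ‖ * ‖w‖ := by
    calc ‖w‖ ^ 2 = ‖⟪α ξ, tensor (WithLp.toLp 2 (star w.ofLp)) ζ⟫_ℂ‖ := by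
          rw [inner_tensor_eq_dotProduct, dotProduct_comm,
            ← EuclideanSpace.inner_eq_star_dotProduct, inner_self_eq_norm_sq_to_K, norm_pow,
            RCLike.norm_ofReal, abs_norm]
      _ ≤ C * ‖ξ‖ * ‖WithLp.toLp 2 (star w.ofLp)‖ * ‖ζ‖ := norm_inner_tensor_le hα _ _ _
      _ = C * ‖ξ‖ * ‖ζ‖ * ‖w‖ := by rw [hstar]; ring
  nlinarith [mul_nonneg (mul_nonneg hC (norm_nonneg ξ)) (norm_nonneg ζ)]

end Bounds

section Channel

variable {a b c : ℕ} (α : EuclideanSpace ℂ (Fin a) →ₗᵢ[ℂ] EuclideanSpace ℂ (Fin b × Fin c))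

lemma isomMat_eq_toMatrix : isomMat α = LinearMap.toMatrix (EuclideanSpace.basisFun _ ℂ).toBasis
    (EuclideanSpace.basisFun _ ℂ).toBasis α.toLinearMap := by
  ext p s
  simp [LinearMap.toMatrix_apply, isomMat]

lemma isomMat_mulVec (ξ : EuclideanSpace ℂ (Fin a)) : isomMat α *ᵥ ξ = α ξ := by
  rw [isomMat_eq_toMatrix]
  exact LinearMap.toMatrix_mulVec_repr _ _ α.toLinearMap ξ

lemma conjTranspose_isomMat_mul_self : (isomMat α)ᴴ * isomMat α = 1 := by
  ext s t
  have h := α.inner_map_map (EuclideanSpace.single s (1 : ℂ)) (EuclideanSpace.single t 1)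
  simp only [PiLp.inner_apply, RCLike.inner_apply] at h
  simp [Matrix.mul_apply, isomMat, Matrix.one_apply, h, eq_comm, mul_comm]

lemma chan_sum {ι : Type*} (s : Finset ι) (ρ : ι → Matrix (Fin a) (Fin a) ℂ) :
    chan α (∑ k ∈ s, ρ k) = ∑ k ∈ s, chan α (ρ k) := by
  ext j j'
  simp only [chan, Matrix.mul_sum, Matrix.sum_mul, Matrix.sum_apply, Matrix.of_apply]
  exact Finset.sum_comm

lemma trace_chan (ρ : Matrix (Fin a) (Fin a) ℂ) : (chan α ρ).trace = ρ.trace := by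
  calc (chan α ρ).trace = (isomMat α * ρ * (isomMat α)ᴴ).trace := by
        simp only [Matrix.trace, Matrix.diag_apply, chan, Matrix.of_apply, Fintype.sum_prod_type]
        exact Finset.sum_comm
    _ = ρ.trace := by rw [Matrix.trace_mul_cycle, conjTranspose_isomMat_mul_self, Matrix.one_mul]

lemma chan_vecMulVec (v : Fin a → ℂ) :
    chan α (vecMulVec v (star v))
      = (starCurry (α (WithLp.toLp 2 v)))ᴴ * starCurry (α (WithLp.toLp 2 v)) := by
  have h : isomMat α * vecMulVec v (star v) * (isomMat α)ᴴ
      = vecMulVec (α (WithLp.toLp 2 v)) (star (α (WithLp.toLp 2 v)).ofLp) := by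
    rw [mul_vecMulVec, vecMulVec_mul, ← star_mulVec, isomMat_mulVec]
  ext j j'
  simp only [chan, h]
  simp only [of_apply, vecMulVec_apply, mul_apply, conjTranspose_apply, starCurry,
    Pi.star_apply, star_star]

lemma posSemidef_chan {ρ : Matrix (Fin a) (Fin a) ℂ} (hρ : ρ.PosSemidef) :
    (chan α ρ).PosSemidef := by
  obtain ⟨m, v, rfl⟩ := posSemidef_iff_eq_sum_vecMulVec.mp hρ
  rw [chan_sum]
  exact posSemidef_sum _ fun k _ => chan_vecMulVec α (v k) ▸ posSemidef_conjTranspose_mul_self _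

lemma norm_chan_le {C : ℝ} (hC : 0 ≤ C) (hα : ProductOverlapLE α C)
    {ρ : Matrix (Fin a) (Fin a) ℂ} (hρ : ρ.PosSemidef) :
    ‖chan α ρ‖ ≤ C ^ 2 * ρ.trace.re := by
  obtain ⟨m, v, rfl⟩ := posSemidef_iff_eq_sum_vecMulVec.mp hρ
  calc ‖chan α (∑ k, vecMulVec (v k) (star (v k)))‖
      ≤ ∑ k, ‖starCurry (α (WithLp.toLp 2 (v k)))‖ ^ 2 := by
        rw [chan_sum]
        refine (norm_sum_le _ _).trans_eq (Finset.sum_congr rfl fun k _ => ?_)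
        rw [chan_vecMulVec, l2_opNorm_conjTranspose_mul_self, sq]
    _ ≤ ∑ k, (C * ‖(WithLp.toLp 2 (v k) : EuclideanSpace ℂ (Fin a))‖) ^ 2 :=
        Finset.sum_le_sum fun k _ => pow_le_pow_left₀ (norm_nonneg _)
          (norm_starCurry_le hC hα _) 2
    _ = C ^ 2 * (∑ k, vecMulVec (v k) (star (v k))).trace.re := by
        simp only [trace_sum, trace_vecMulVec_star, Complex.re_sum, Complex.ofReal_re,
          Finset.mul_sum, mul_pow]

end Channel

lemma Matrix.IsHermitian.eigenvalues_le_l2_opNorm {𝕜 n : Type*} [RCLike 𝕜] [Fintype n]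
    [DecidableEq n] {M : Matrix n n 𝕜} (hM : M.IsHermitian) (i : n) : hM.eigenvalues i ≤ ‖M‖ := by
  have h := M.l2_opNorm_mulVec (hM.eigenvectorBasis i)
  simp only [hM.mulVec_eigenvectorBasis, PiLp.continuousLinearEquiv_symm_apply, WithLp.toLp_smul,
    WithLp.toLp_ofLp, norm_smul, Real.norm_eq_abs, OrthonormalBasis.norm_eq_one, mul_one] at h
  exact (le_abs_self _).trans h

lemma Finset.sum_mul_log_le_log {ι : Type*} (s : Finset ι) {p : ι → ℝ} {K : ℝ}
    (h0 : ∀ i ∈ s, 0 ≤ p i) (hK : ∀ i ∈ s, p i ≤ K) (h1 : ∑ i ∈ s, p i = 1) :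
    ∑ i ∈ s, p i * Real.log (p i) ≤ Real.log K := by
  calc ∑ i ∈ s, p i * Real.log (p i) ≤ ∑ i ∈ s, p i * Real.log K := by
        refine Finset.sum_le_sum fun i hi => ?_
        rcases (h0 i hi).eq_or_lt with hp | hp
        · simp [← hp]
        · exact mul_le_mul_of_nonneg_left (Real.log_le_log hp (hK i hi)) hp.le
    _ = Real.log K := by rw [← Finset.sum_mul, h1, one_mul]

theorem channel_norm_and_MOE_bounds (a b c : ℕ)
    (α : EuclideanSpace ℂ (Fin a) →ₗᵢ[ℂ] EuclideanSpace ℂ (Fin b × Fin c))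
    (C : ℝ) (hC : 0 < C)
    (hα : ∀ (ξ : EuclideanSpace ℂ (Fin a)) (η : EuclideanSpace ℂ (Fin b))
      (ζ : EuclideanSpace ℂ (Fin c)), ‖ξ‖ = 1 → ‖η‖ = 1 → ‖ζ‖ = 1 →
        ‖⟪α ξ, tensor η ζ⟫_ℂ‖ ≤ C) :
    ∀ (ρ : Matrix (Fin a) (Fin a) ℂ), ρ.PosSemidef → ρ.trace = 1 →
      ‖Matrix.toEuclideanCLM (𝕜 := ℂ) (chan α ρ)‖ ≤ C ^ 2 ∧
      ∀ (h : (chan α ρ).IsHermitian),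
        -(2 * Real.log C) ≤ -∑ i, h.eigenvalues i * Real.log (h.eigenvalues i) := by
  intro ρ hρ htr
  have hnorm : ‖chan α ρ‖ ≤ C ^ 2 := by
    simpa [htr] using norm_chan_le α hC.le hα hρ
  refine ⟨hnorm, fun h => ?_⟩
  have hsum : ∑ i, h.eigenvalues i = 1 := by
    have := congrArg Complex.re h.trace_eq_sum_eigenvalues
    simpa [trace_chan, htr] using this.symm
  have hentropy := Finset.sum_mul_log_le_log Finset.univ
    (fun i _ => (posSemidef_chan α hρ).eigenvalues_nonneg i)
    (fun i _ => (h.eigenvalues_le_l2_opNorm i).trans hnorm) hsum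
  rw [Real.log_pow, Nat.cast_ofNat] at hentropy
  linarith
end

section
/- Let H_A, H_B be finite-dimensional Hilbert spaces and α : H → H_A ⊗ H_B a linear isometry from another finite-dimensional Hilbert space H. Suppose there is a constant c > 0 with |⟨α(ξ), η ⊗ ζ⟩| ≤ c for all unit vectors ξ ∈ H, η ∈ H_A, ζ ∈ H_B. For t ≥ 0 define the operator C_t := I_{H_A ⊗ H_B} − t·αα* on H_A ⊗ H_B. Then for every natural number d ≥ 1 and every vector x ∈ H_A ⊗ H_B of Schmidt rank at most d, one has ⟨C_t x, x⟩ ≥ ‖x‖²·(1 − t·d·c²). In particular if t ≤ 1/(d·c²) then ⟨C_t x, x⟩ ≥ 0 for all such x. -/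
/-! With `A = α*` one has `⟪C_t x, x⟫ = ‖x‖² - t ‖A x‖²`. Testing the hypothesis on `α` against
the unit vector in the direction of `A (e i ⊗ f i)` gives `‖A (e i ⊗ f i)‖ ≤ c`. The tensors
`e i ⊗ f i` are orthonormal, so for `x = ∑ μ i • e i ⊗ f i` the triangle and Cauchy–Schwarz
inequalities give `‖A x‖ ≤ c ∑ |μ i| ≤ c √d ‖x‖`. -/

open scoped InnerProductSpace

open RCLike

section

variable {𝕜 E F ι : Type*} [RCLike 𝕜]
  [NormedAddCommGroup E] [InnerProductSpace 𝕜 E] [NormedAddCommGroup F] [InnerProductSpace 𝕜 F]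

theorem Orthonormal.norm_sum_smul_sq {v : ι → E} (hv : Orthonormal 𝕜 v) (μ : ι → 𝕜)
    (s : Finset ι) : ‖∑ i ∈ s, μ i • v i‖ ^ 2 = ∑ i ∈ s, ‖μ i‖ ^ 2 := by
  rw [@norm_sq_eq_re_inner 𝕜, hv.inner_sum, map_sum]
  exact Finset.sum_congr rfl fun i _ => by rw [RCLike.conj_mul, ← ofReal_pow, ofReal_re]

theorem Orthonormal.norm_map_sum_smul_sq_le [Fintype ι] {v : ι → E} (hv : Orthonormal 𝕜 v)
    (T : E →ₗ[𝕜] F) {c : ℝ} (hT : ∀ i, ‖T (v i)‖ ≤ c) (μ : ι → 𝕜) :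
    ‖T (∑ i, μ i • v i)‖ ^ 2 ≤ Fintype.card ι * c ^ 2 * ‖∑ i, μ i • v i‖ ^ 2 := by
  have hle : ‖T (∑ i, μ i • v i)‖ ≤ (∑ i, ‖μ i‖) * c := by
    rw [map_sum, Finset.sum_mul]
    refine (norm_sum_le _ _).trans (Finset.sum_le_sum fun i _ => ?_)
    rw [map_smul, norm_smul]
    exact mul_le_mul_of_nonneg_left (hT i) (norm_nonneg _)
  calc ‖T (∑ i, μ i • v i)‖ ^ 2 ≤ (∑ i, ‖μ i‖) ^ 2 * c ^ 2 := by
        rw [← mul_pow]; exact pow_le_pow_left₀ (norm_nonneg _) hle 2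
    _ ≤ (Fintype.card ι * ∑ i, ‖μ i‖ ^ 2) * c ^ 2 := by
        gcongr; exact sq_sum_le_card_mul_sum_sq
    _ = Fintype.card ι * c ^ 2 * ‖∑ i, μ i • v i‖ ^ 2 := by
        rw [hv.norm_sum_smul_sq]; ring

variable [FiniteDimensional 𝕜 E] [FiniteDimensional 𝕜 F]

theorem LinearMap.norm_adjoint_apply_le (T : E →ₗ[𝕜] F) (y : F) {c : ℝ} (hc : 0 ≤ c)
    (h : ∀ ξ, ‖ξ‖ = 1 → ‖⟪T ξ, y⟫_𝕜‖ ≤ c) : ‖adjoint T y‖ ≤ c := by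
  set w := adjoint T y
  rcases eq_or_ne w 0 with hw | hw
  · rwa [hw, norm_zero]
  have hwpos : 0 < ‖w‖ := norm_pos_iff.2 hw
  -- `ξ = w / ‖w‖` gives `⟪T ξ, y⟫ = ⟪ξ, w⟫ = ‖w‖`
  have key := h ((‖w‖⁻¹ : 𝕜) • w) (by simp [norm_smul, hwpos.ne'])
  rwa [map_smul, inner_smul_left, ← adjoint_inner_right, inner_self_eq_norm_sq_to_K, norm_mul,
    norm_pow, norm_conj, norm_inv, norm_algebraMap', norm_norm, pow_two,
    inv_mul_cancel_left₀ hwpos.ne'] at key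

theorem LinearMap.re_inner_sub_smul_adjoint (T : E →ₗ[𝕜] F) (x : F) (t : ℝ) :
    re ⟪x - (t : 𝕜) • T (adjoint T x), x⟫_𝕜 = ‖x‖ ^ 2 - t * ‖adjoint T x‖ ^ 2 := by
  rw [inner_sub_left, inner_smul_left, ← adjoint_inner_right, inner_self_eq_norm_sq_to_K,
    inner_self_eq_norm_sq_to_K, conj_ofReal]
  simp

end

theorem inner_tensor_tensor {a b : ℕ} (η η' : EuclideanSpace ℂ (Fin a))
    (ζ ζ' : EuclideanSpace ℂ (Fin b)) :
    ⟪tensor η ζ, tensor η' ζ'⟫_ℂ = ⟪η, η'⟫_ℂ * ⟪ζ, ζ'⟫_ℂ := by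
  simp only [tensor, PiLp.inner_apply, RCLike.inner_apply, map_mul]
  rw [Fintype.sum_prod_type, Finset.sum_mul_sum]
  exact Finset.sum_congr rfl fun i _ => Finset.sum_congr rfl fun j _ => by ring

theorem Orthonormal.tensor {ι : Type*} {a b : ℕ} {e : ι → EuclideanSpace ℂ (Fin a)}
    {f : ι → EuclideanSpace ℂ (Fin b)} (he : Orthonormal ℂ e) (hf : Orthonormal ℂ f) :
    Orthonormal ℂ fun i => tensor (e i) (f i) := by
  classical
  rw [orthonormal_iff_ite] at he hf ⊢
  intro i j
  rw [inner_tensor_tensor, he, hf]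
  split_ifs <;> simp

theorem choi_matrix_d_positivity_general (h a b : ℕ)
    (α : EuclideanSpace ℂ (Fin h) →ₗᵢ[ℂ] EuclideanSpace ℂ (Fin a × Fin b))
    (c : ℝ) (hc : 0 < c)
    (hα : ∀ (ξ : EuclideanSpace ℂ (Fin h)) (η : EuclideanSpace ℂ (Fin a))
      (ζ : EuclideanSpace ℂ (Fin b)), ‖ξ‖ = 1 → ‖η‖ = 1 → ‖ζ‖ = 1 →
        ‖⟪α ξ, tensor η ζ⟫_ℂ‖ ≤ c)
    (t : ℝ) (ht : 0 ≤ t) (d : ℕ)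
    (lam : Fin d → ℝ)
    (e : Fin d → EuclideanSpace ℂ (Fin a)) (f : Fin d → EuclideanSpace ℂ (Fin b))
    (he : Orthonormal ℂ e) (hf : Orthonormal ℂ f)
    (x : EuclideanSpace ℂ (Fin a × Fin b))
    (hx : x = ∑ i, (Real.sqrt (lam i) : ℂ) • tensor (e i) (f i)) :
    ‖x‖ ^ 2 * (1 - t * d * c ^ 2) ≤
      (⟪x - (t : ℂ) • α (LinearMap.adjoint α.toLinearMap x), x⟫_ℂ).re ∧
    (t ≤ 1 / (d * c ^ 2) →
      0 ≤ (⟪x - (t : ℂ) • α (LinearMap.adjoint α.toLinearMap x), x⟫_ℂ).re) := by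
  set A := LinearMap.adjoint α.toLinearMap
  have hA : ∀ i, ‖A (tensor (e i) (f i))‖ ≤ c := fun i =>
    α.toLinearMap.norm_adjoint_apply_le _ hc.le fun ξ hξ => hα ξ _ _ hξ (he.1 i) (hf.1 i)
  have hAx : ‖A x‖ ^ 2 ≤ d * c ^ 2 * ‖x‖ ^ 2 := by
    simpa [hx] using (he.tensor hf).norm_map_sum_smul_sq_le A hA fun i => (√(lam i) : ℂ)
  rw [show (⟪x - (t : ℂ) • α (A x), x⟫_ℂ).re = ‖x‖ ^ 2 - t * ‖A x‖ ^ 2 from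
    α.toLinearMap.re_inner_sub_smul_adjoint x t]
  have hbound : ‖x‖ ^ 2 * (1 - t * d * c ^ 2) ≤ ‖x‖ ^ 2 - t * ‖A x‖ ^ 2 := by
    nlinarith [mul_le_mul_of_nonneg_left hAx ht]
  refine ⟨hbound, fun htdc => le_trans ?_ hbound⟩
  have : t * (d * c ^ 2) ≤ 1 := mul_le_of_le_div₀ zero_le_one (by positivity) htdc
  exact mul_nonneg (sq_nonneg _) (by linarith)

theorem choi_matrix_d_positivity (h a b : ℕ)
    (α : EuclideanSpace ℂ (Fin h) →ₗᵢ[ℂ] EuclideanSpace ℂ (Fin a × Fin b))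
    (c : ℝ) (hc : 0 < c)
    (hα : ∀ (ξ : EuclideanSpace ℂ (Fin h)) (η : EuclideanSpace ℂ (Fin a))
      (ζ : EuclideanSpace ℂ (Fin b)), ‖ξ‖ = 1 → ‖η‖ = 1 → ‖ζ‖ = 1 →
        ‖⟪α ξ, tensor η ζ⟫_ℂ‖ ≤ c)
    (t : ℝ) (ht : 0 ≤ t) (d : ℕ) (hd : 1 ≤ d)
    (lam : Fin d → ℝ) (hlam : ∀ i, 0 < lam i)
    (e : Fin d → EuclideanSpace ℂ (Fin a)) (f : Fin d → EuclideanSpace ℂ (Fin b))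
    (he : Orthonormal ℂ e) (hf : Orthonormal ℂ f)
    (x : EuclideanSpace ℂ (Fin a × Fin b))
    (hx : x = ∑ i, (Real.sqrt (lam i) : ℂ) • tensor (e i) (f i)) :
    ‖x‖ ^ 2 * (1 - t * d * c ^ 2) ≤
      (⟪x - (t : ℂ) • α (LinearMap.adjoint α.toLinearMap x), x⟫_ℂ).re ∧
    (t ≤ 1 / (d * c ^ 2) →
      0 ≤ (⟪x - (t : ℂ) • α (LinearMap.adjoint α.toLinearMap x), x⟫_ℂ).re) :=
  choi_matrix_d_positivity_general h a b α c hc hα t ht d lam e f he hf x hx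
end
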